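/- Let d ≥ 1, k ≥ 1, and let F be a connected simple graph with vertex set {0, 1, …, k}. Let h : ℝ^d → [0,1] be measurable with h(−x) = h(x) for all x and ∫_{ℝ^d} h(x) dx < ∞. Then for every fixed x_0 ∈ ℝ^d, ∫_{(ℝ^d)^k} ∏_{{i,j} ∈ E(F)} h(x_i − x_j) dx_1 ⋯ dx_k ≤ (∫_{ℝ^d} h(x) dx)^k, where the integral is with respect to Lebesgue measure on (ℝ^d)^k. -/

import Mathlib

/-!
For every vertex `v ≠ 0` pick a neighbour `parent v` strictly closer to `0`; these edges form a
spanning tree. As `0 ≤ h ≤ 1`, dropping all other edges can only increase the integrand. The tree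
product is then integrated one vertex at a time in order of decreasing distance from `0`: a deepest
vertex `v` is a leaf, so `x_v` occurs only in `h (x_{parent v} - x_v)`, whose integral over `x_v`
is `∫ h` by translation and reflection invariance of Lebesgue measure. After `k` steps only the
fixed root `x₀` is left and the bound `(∫ h) ^ k` follows.
-/

open MeasureTheory Finset Function
open scoped ENNReal

theorem SimpleGraph.Connected.exists_adj_dist_lt {V : Type*} {G : SimpleGraph V}
    (hG : G.Connected) {v r : V} (hv : v ≠ r) : ∃ u, G.Adj u v ∧ G.dist u r < G.dist v r := by
  obtain ⟨w, hw⟩ := hG.exists_walk_length_eq_dist v r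
  cases w with
  | nil => exact absurd rfl hv
  | cons hadj w =>
    rw [SimpleGraph.Walk.length_cons] at hw
    exact ⟨_, hadj.symm, (G.dist_le w).trans_lt (by omega)⟩

theorem SimpleGraph.prod_adj_le_prod_parent {V M : Type*} [Fintype V] [LinearOrder V]
    [CommMonoid M] [Preorder M] [MulLeftMono M] (G : SimpleGraph V) [DecidableRel G.Adj]
    (w : V → V → M) (hw : ∀ a b, w a b ≤ 1) (s : Finset V) (parent : V → V) (depth : V → ℕ)
    (hadj : ∀ i ∈ s, G.Adj (parent i) i) (hdepth : ∀ i ∈ s, depth (parent i) < depth i) :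
    ∏ e ∈ univ.filter (fun e : V × V => e.1 < e.2 ∧ G.Adj e.1 e.2), w e.1 e.2
      ≤ ∏ i ∈ s, w (min (parent i) i) (max (parent i) i) := by
  set edge : V → V × V := fun i => (min (parent i) i, max (parent i) i)
  have hinj : Set.InjOn edge s := by
    intro i hi j hj hij
    have hi' := hdepth i hi
    have hj' := hdepth j hj
    simp only [edge, Prod.ext_iff] at hij
    grind
  have hsub : s.image edge ⊆ univ.filter (fun e : V × V => e.1 < e.2 ∧ G.Adj e.1 e.2) := by
    intro e he
    obtain ⟨i, hi, rfl⟩ := mem_image.1 he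
    have hne : parent i ≠ i := fun h => (hdepth i hi).ne (congrArg depth h)
    rcases lt_or_gt_of_ne hne with h | h
    · simp [edge, h.le, h, hadj i hi]
    · simp [edge, h.le, h, (hadj i hi).symm]
  calc _ ≤ ∏ e ∈ s.image edge, w e.1 e.2 :=
        prod_le_prod_of_subset_of_le_one' hsub fun e _ _ => hw _ _
    _ = _ := prod_image hinj

section Marginal

variable {ι : Type*} [DecidableEq ι]

theorem MeasureTheory.lmarginal_const_mul {X : ι → Type*} [∀ i, MeasurableSpace (X i)]
    (μ : ∀ i, Measure (X i)) (s : Finset ι) {f : (∀ i, X i) → ℝ≥0∞} (hf : Measurable f)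
    (c : ℝ≥0∞) :
    ∫⋯∫⁻_s, (fun x => c * f x) ∂μ = fun x => c * (∫⋯∫⁻_s, f ∂μ) x := by
  ext x
  exact lintegral_const_mul c (hf.comp measurable_updateFinset)

variable {E : Type*} [MeasurableSpace E] {μ : Measure E} [SigmaFinite μ]

theorem MeasureTheory.lmarginal_prod_parent_le_pow (g : ι → E → E → ℝ≥0∞)
    (hg : ∀ i, Measurable (uncurry (g i))) {C : ℝ≥0∞} (hC : ∀ i a, ∫⁻ b, g i a b ∂μ ≤ C)
    (parent : ι → ι) (depth : ι → ℕ) (s : Finset ι)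
    (hdepth : ∀ i ∈ s, depth (parent i) < depth i) (x : ι → E) :
    (∫⋯∫⁻_s, (fun y => ∏ i ∈ s, g i (y (parent i)) (y i)) ∂fun _ => μ) x ≤ C ^ #s := by
  have hmeas : ∀ t : Finset ι, Measurable fun y : ι → E => ∏ i ∈ t, g i (y (parent i)) (y i) :=
    fun t => Finset.measurable_prod _ fun i _ =>
      (hg i).comp (f := fun y : ι → E => (y (parent i), y i)) (by fun_prop)
  induction s using Finset.induction_on_max_value depth generalizing x with
  | empty => simp
  | insert a s ha hmax ih =>
    have hparent_a : parent a ≠ a := fun h => (hdepth a (mem_insert_self a s)).ne (congrArg depth h)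
    have hparent_s : ∀ i ∈ s, i ≠ a ∧ parent i ≠ a := fun i hi =>
      ⟨ne_of_mem_of_not_mem hi ha, fun h =>
        ((hdepth i (mem_insert_of_mem hi)).trans_le (hmax i hi)).ne (congrArg depth h)⟩
    -- `a` has maximal depth, hence is a leaf: no factor other than its own involves `y a`
    have hfactor : ∀ (y : ι → E) (b : E),
        ∏ i ∈ insert a s, g i (update y a b (parent i)) (update y a b i)
          = g a (y (parent a)) b * ∏ i ∈ s, g i (y (parent i)) (y i) := by
      intro y b
      rw [prod_insert ha, update_self, update_of_ne hparent_a]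
      congr 1
      refine prod_congr rfl fun i hi => ?_
      rw [update_of_ne (hparent_s i hi).1, update_of_ne (hparent_s i hi).2]
    calc (∫⋯∫⁻_insert a s, (fun y => ∏ i ∈ insert a s, g i (y (parent i)) (y i)) ∂fun _ => μ) x
        = (∫⋯∫⁻_s, (fun y => (∫⁻ b, g a (y (parent a)) b ∂μ) *
            ∏ i ∈ s, g i (y (parent i)) (y i)) ∂fun _ => μ) x := by
          rw [lmarginal_insert' _ (hmeas _) ha]
          simp_rw [hfactor]
          congr! 3 with y
          exact lintegral_mul_const _ (hg a).of_uncurry_left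
      _ ≤ (∫⋯∫⁻_s, (fun y => C * ∏ i ∈ s, g i (y (parent i)) (y i)) ∂fun _ => μ) x :=
          lmarginal_mono (fun y => by gcongr; exact hC _ _) x
      _ ≤ C * C ^ #s := by
          rw [lmarginal_const_mul _ _ (hmeas s)]
          beta_reduce
          gcongr
          exact ih (fun i hi => hdepth i (mem_insert_of_mem hi)) x
      _ = C ^ #(insert a s) := by rw [card_insert_of_notMem ha, pow_succ']

end Marginal

theorem MeasureTheory.lintegral_cons_eq_lmarginal {n : ℕ} {X : Fin (n + 1) → Type*}
    [∀ i, MeasurableSpace (X i)] (μ : ∀ i, Measure (X i)) [∀ i, SigmaFinite (μ i)]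
    {f : (∀ i, X i) → ℝ≥0∞} (hf : Measurable f) (x : ∀ i, X i) :
    ∫⁻ y, f (Fin.cons (x 0) y) ∂Measure.pi (fun i => μ i.succ)
      = (∫⋯∫⁻_{0}ᶜ, f ∂μ) x := by
  have hcons : Measurable fun y : ∀ i, X (Fin.succ i) => (Fin.cons (x 0) y : ∀ i, X i) :=
    measurable_pi_lambda _ fun i =>
      Fin.cases (by simp) (fun j => by simpa using measurable_pi_apply j) i
  calc ∫⁻ y, f (Fin.cons (x 0) y) ∂Measure.pi (fun i => μ i.succ)
      = (∫⋯∫⁻_univ.image Fin.succ, (fun y => f (Fin.cons (x 0) y)) ∘ (· ∘' Fin.succ) ∂μ) x := by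
        have hf' : Measurable fun y => f (Fin.cons (x 0) y) := hf.comp hcons
        rw [lmarginal_image (Fin.succ_injective n) univ hf' x, lmarginal_univ]
    _ = (∫⋯∫⁻_univ.image Fin.succ, f ∘ (update · 0 (x 0)) ∂μ) x := by
        congr! 2
        funext z
        simp only [Function.comp_apply]
        rw [← Fin.update_cons_zero (x := z 0)]
        exact congrArg (fun w => f (update w 0 (x 0))) (Fin.cons_self_tail z)
    _ = (∫⋯∫⁻_{0}ᶜ, f ∂μ) x := by
        rw [Fin.image_succ_univ, ← lmarginal_update_of_notMem hf (by simp), update_eq_self]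

theorem MeasureTheory.integral_le_integral_pow_of_lintegral_le {α β : Type*} [MeasurableSpace α]
    [MeasurableSpace β] {μ : Measure α} {ν : Measure β} {f : α → ℝ} {g : β → ℝ}
    (hf_nonneg : ∀ x, 0 ≤ f x) (hf : AEStronglyMeasurable f μ) (hg_nonneg : ∀ x, 0 ≤ g x)
    (hg : Integrable g ν) (n : ℕ)
    (hle : ∫⁻ x, ENNReal.ofReal (f x) ∂μ ≤ (∫⁻ x, ENNReal.ofReal (g x) ∂ν) ^ n) :
    ∫ x, f x ∂μ ≤ (∫ x, g x ∂ν) ^ n := by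
  have hg_eq := ofReal_integral_eq_lintegral_ofReal hg (.of_forall hg_nonneg)
  rw [← hg_eq] at hle
  rw [integral_eq_lintegral_of_nonneg_ae (.of_forall hf_nonneg) hf,
    ← ENNReal.toReal_ofReal (integral_nonneg hg_nonneg), ← ENNReal.toReal_pow]
  exact ENNReal.toReal_mono (ENNReal.pow_ne_top ENNReal.ofReal_ne_top) hle

section GraphIntegral

variable {E : Type*} [MeasurableSpace E] [AddCommGroup E] [MeasurableAdd₂ E] [MeasurableNeg E]
  {μ : Measure E} [SigmaFinite μ] [μ.IsAddLeftInvariant] [μ.IsNegInvariant]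

theorem SimpleGraph.Connected.lintegral_prod_edges_le_pow {n : ℕ} {F : SimpleGraph (Fin (n + 1))}
    [DecidableRel F.Adj] (hF : F.Connected) {H : E → ℝ≥0∞} (hH : Measurable H)
    (hH_le : ∀ x, H x ≤ 1) (x₀ : E) :
    ∫⁻ y, ∏ e ∈ univ.filter (fun e : Fin (n + 1) × Fin (n + 1) => e.1 < e.2 ∧ F.Adj e.1 e.2),
        H ((Fin.cons x₀ y : Fin (n + 1) → E) e.1 - (Fin.cons x₀ y : Fin (n + 1) → E) e.2)
        ∂Measure.pi (fun _ => μ)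
      ≤ (∫⁻ x, H x ∂μ) ^ n := by
  choose! parent hadj hdepth using fun v (hv : v ≠ (0 : Fin (n + 1))) =>
    hF.exists_adj_dist_lt hv
  -- `g i` orients the tree edge `{parent i, i}` from the smaller to the larger vertex,
  -- as in the edge product
  set g : Fin (n + 1) → E → E → ℝ≥0∞ := fun i a b =>
    if parent i ≤ i then H (a - b) else H (b - a)
  have hg_meas : ∀ i, Measurable (uncurry (g i)) := fun i => by
    by_cases hi : parent i ≤ i <;> simp only [g, hi, if_true, if_false] <;> fun_prop
  have hg_int : ∀ i a, ∫⁻ b, g i a b ∂μ ≤ ∫⁻ x, H x ∂μ := fun i a => by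
    by_cases hi : parent i ≤ i <;>
      simp [g, hi, lintegral_sub_left_eq_self, lintegral_sub_right_eq_self]
  have hedges : ∀ x : Fin (n + 1) → E,
      ∏ e ∈ univ.filter (fun e : Fin (n + 1) × Fin (n + 1) => e.1 < e.2 ∧ F.Adj e.1 e.2),
        H (x e.1 - x e.2) ≤ ∏ i ∈ {0}ᶜ, g i (x (parent i)) (x i) := fun x => by
    refine (F.prod_adj_le_prod_parent (fun a b => H (x a - x b)) (fun _ _ => hH_le _) {0}ᶜ
      parent (F.dist · 0) (by simpa using hadj) (by simpa using hdepth)).trans_eq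
      (prod_congr rfl fun i _ => ?_)
    rcases le_or_gt (parent i) i with hi | hi
    · simp [g, hi]
    · simp [g, hi.le, hi.not_ge]
  have hprod_meas : Measurable fun x : Fin (n + 1) → E => ∏ i ∈ {0}ᶜ, g i (x (parent i)) (x i) :=
    Finset.measurable_prod _ fun i _ =>
      (hg_meas i).comp (f := fun x : Fin (n + 1) → E => (x (parent i), x i)) (by fun_prop)
  calc _ ≤ ∫⁻ y, ∏ i ∈ {0}ᶜ, g i ((Fin.cons x₀ y : Fin (n + 1) → E) (parent i))
          ((Fin.cons x₀ y : Fin (n + 1) → E) i) ∂Measure.pi (fun _ => μ) :=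
        lintegral_mono fun y => hedges _
    _ = (∫⋯∫⁻_{0}ᶜ, (fun x => ∏ i ∈ {0}ᶜ, g i (x (parent i)) (x i)) ∂fun _ => μ) fun _ => x₀ :=
        lintegral_cons_eq_lmarginal (fun _ => μ) hprod_meas fun _ => x₀
    _ ≤ (∫⁻ x, H x ∂μ) ^ #({0}ᶜ : Finset (Fin (n + 1))) :=
        lmarginal_prod_parent_le_pow g hg_meas hg_int parent (F.dist · 0) _
          (by simpa using hdepth) _
    _ = (∫⁻ x, H x ∂μ) ^ n := by
        rw [card_compl, card_singleton, Fintype.card_fin, Nat.add_sub_cancel]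

end GraphIntegral

theorem statement16_general (d k : ℕ)
    (F : SimpleGraph (Fin (k + 1))) [DecidableRel F.Adj] (hFconn : F.Connected)
    (h : (Fin d → ℝ) → ℝ) (hmeas : Measurable h)
    (h01 : ∀ x, h x ∈ Set.Icc (0 : ℝ) 1)
    (hint : Integrable h)
    (x₀ : Fin d → ℝ) :
    (∫ y : Fin k → Fin d → ℝ,
        ∏ p ∈ Finset.univ.filter
            (fun p : Fin (k + 1) × Fin (k + 1) => p.1 < p.2 ∧ F.Adj p.1 p.2),
          h ((Fin.cons x₀ y : Fin (k + 1) → Fin d → ℝ) p.1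
              - (Fin.cons x₀ y : Fin (k + 1) → Fin d → ℝ) p.2))
      ≤ (∫ x : Fin d → ℝ, h x) ^ k := by
  refine integral_le_integral_pow_of_lintegral_le (fun y => prod_nonneg fun _ _ => (h01 _).1)
    (Finset.measurable_prod _ fun _ _ => by fun_prop).aestronglyMeasurable (fun x => (h01 x).1)
    hint k ?_
  simp_rw [ENNReal.ofReal_prod_of_nonneg fun _ _ => (h01 _).1]
  exact hFconn.lintegral_prod_edges_le_pow (ENNReal.measurable_ofReal.comp hmeas)
    (fun x => ENNReal.ofReal_le_one.2 (h01 x).2) x₀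

/-- Let `F` be a connected simple graph on vertex set `{0, 1, …, k}` and let
`h : ℝ^d → [0,1]` be an even measurable integrable function. Then for every fixed
`x₀ ∈ ℝ^d`,
`∫_{(ℝ^d)^k} ∏_{{i,j} ∈ E(F)} h(x_i − x_j) dx_1 ⋯ dx_k ≤ (∫_{ℝ^d} h)^k`,
where the product runs over the edges of `F` (each edge taken with orientation `i < j`,
which is immaterial since `h` is even), and `x : Fin (k+1) → ℝ^d` is given by `x 0 = x₀`
and `x i = y i` for the integration variables `y`. -/
theorem statement16 (d k : ℕ) (hd : 1 ≤ d) (hk : 1 ≤ k)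
    (F : SimpleGraph (Fin (k + 1))) [DecidableRel F.Adj] (hFconn : F.Connected)
    (h : (Fin d → ℝ) → ℝ) (hmeas : Measurable h)
    (h01 : ∀ x, h x ∈ Set.Icc (0 : ℝ) 1)
    (heven : ∀ x, h (-x) = h x) (hint : Integrable h)
    (x₀ : Fin d → ℝ) :
    (∫ y : Fin k → Fin d → ℝ,
        ∏ p ∈ Finset.univ.filter
            (fun p : Fin (k + 1) × Fin (k + 1) => p.1 < p.2 ∧ F.Adj p.1 p.2),
          h ((Fin.cons x₀ y : Fin (k + 1) → Fin d → ℝ) p.1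
              - (Fin.cons x₀ y : Fin (k + 1) → Fin d → ℝ) p.2))
      ≤ (∫ x : Fin d → ℝ, h x) ^ k :=
  statement16_general d k F hFconn h hmeas h01 hint x₀
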